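/- Let G be a group with a chain of normal subgroups 1 = R_0 ≤ R_1 ≤ … ≤ R_k, each R_i normal in G, such that for every i = 1,…,k the image of R_i in G/R_{i-1} is exactly the set of nil-elements of G/R_{i-1}, and such that the identity is the only nil-element of G/R_k. Then R_k is exactly the set of quasi-nil elements of G. -/

import Mathlib

/-- Engel words with the convention of the paper: the commutator is
`[x, y] = x⁻¹ * y⁻¹ * x * y`, `engelWord 0 x y = x` and
`engelWord (n+1) x y = [engelWord n x y, y]`; thus for `n ≥ 1`,
`engelWord n x y` is the Engel word `e_n(x, y)`. -/
def engelWord {G : Type*} [Group G] : ℕ → G → G → G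
  | 0, x, _ => x
  | n + 1, x, y => (engelWord n x y)⁻¹ * y⁻¹ * engelWord n x y * y

/-- Iterated Engel words: `epsEngel [(n₁,a₁),…,(n_k,a_k)] y` is
`ε_{(n₁,…,n_k)}(a₁,…,a_k; y)`, defined by `ε_{(n₁)}(a₁;y) = e_{n₁}(a₁,y)` and
`ε_{(n₁,…,n_k)}(a₁,…,a_k;y) = e_{n_k}(a_k, ε_{(n₁,…,n_{k-1})}(a₁,…,a_{k-1};y))`. -/
def epsEngel {G : Type*} [Group G] (l : List (ℕ × G)) (y : G) : G :=
  l.foldl (fun z p => engelWord p.1 p.2 z) y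

/-- `g` is a nil-element if for every `a` there is `n ≥ 1` with `e_n(a, g) = 1`. -/
def IsNilElement {G : Type*} [Group G] (g : G) : Prop :=
  ∀ a : G, ∃ n, 1 ≤ n ∧ engelWord n a g = 1

/-- A group is locally nilpotent if every finitely generated subgroup is nilpotent. -/
def LocallyNilpotent (G : Type*) [Group G] : Prop :=
  ∀ H : Subgroup G, H.FG → Group.IsNilpotent H

/-- `g` is quasi-nil of order ≤ `k`: there are functions `ν i : G^(i+1) → ℕ` (with values ≥ 1,
`ν i` depending only on `a₁,…,a_{i+1}` and `g`) such that for all `a : Fin k → G`,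
`ε_{(ν₁(a₁),…,ν_k(a₁,…,a_k))}(a₁,…,a_k; g) = 1`. -/
def IsQuasiNilOfOrder {G : Type*} [Group G] (k : ℕ) (g : G) : Prop :=
  ∃ ν : ∀ i : Fin k, (Fin ((i : ℕ) + 1) → G) → ℕ,
    (∀ i f, 1 ≤ ν i f) ∧
    ∀ a : Fin k → G,
      epsEngel (List.ofFn fun i : Fin k =>
        (ν i fun j => a (Fin.castLE i.isLt j), a i)) g = 1

/-- `g` is quasi-nil if it is quasi-nil of order ≤ `k` for some `k ≥ 1`. -/
def IsQuasiNil {G : Type*} [Group G] (g : G) : Prop :=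
  ∃ k, 1 ≤ k ∧ IsQuasiNilOfOrder k g

/-- `g` maps to a nil-element of the quotient `G ⧸ N` (for `N` normal). -/
def IsNilElementQuot {G : Type*} [Group G] (N : Subgroup G) (hN : N.Normal) (g : G) : Prop :=
  @IsNilElement (G ⧸ N) (@QuotientGroup.Quotient.group G _ N hN) (QuotientGroup.mk g)

/-!
Quasi-nilpotency of order `k + 1` unfolds one step at a time: `g` is quasi-nil of order `k + 1`
iff for every `a` some `e_n(a, g)` with `n ≥ 1` is quasi-nil of order `k` (the remaining `ν_i`
may depend on `a₁`). If `g ∈ R_{i+1}`, then `g` is a nil-element modulo `R_i`, so every `a` has an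
Engel word `e_n(a, g) ∈ R_i`; by induction along the chain, elements of `R_k` are quasi-nil of
order `k`. Conversely, if `g ∉ R_k`, then `g` is not a nil-element modulo `R_k`, so some `a` keeps
every `e_n(a, g)` outside `R_k`; choosing such `a_i` step by step, the iterated Engel word never
becomes `1`.
-/

section

variable {G : Type*} [Group G]

theorem map_engelWord {H F : Type*} [Group H] [FunLike F G H] [MonoidHomClass F G H] (f : F)
    (n : ℕ) (x y : G) :
    f (engelWord n x y) = engelWord n (f x) (f y) := by
  induction n with
  | zero => rfl
  | succ n ih => simp [engelWord, ih]

theorem epsEngel_cons (p : ℕ × G) (l : List (ℕ × G)) (y : G) :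
    epsEngel (p :: l) y = epsEngel l (engelWord p.1 p.2 y) :=
  rfl

theorem isNilElementQuot_iff (N : Subgroup G) (hN : N.Normal) (g : G) :
    IsNilElementQuot N hN g ↔ ∀ a : G, ∃ n, 1 ≤ n ∧ engelWord n a g ∈ N := by
  rw [IsNilElementQuot, IsNilElement, (QuotientGroup.mk'_surjective N).forall]
  refine forall_congr' fun a => exists_congr fun n => and_congr_right' ?_
  rw [← QuotientGroup.eq_one_iff]
  exact Iff.of_eq (congrArg (· = 1) (map_engelWord (QuotientGroup.mk' N) n a g)).symm

theorem Fin.cons_castLE {α : Type*} {m n : ℕ} (h : m + 1 ≤ n + 1) (a : α) (b : Fin n → α)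
    (j : Fin (m + 1)) :
    (Fin.cons a b : Fin (n + 1) → α) (Fin.castLE h j) =
      (Fin.cons a (fun j : Fin m => b (Fin.castLE (Nat.le_of_succ_le_succ h) j)) :
        Fin (m + 1) → α) j :=
  Fin.cases rfl (fun _ => rfl) j

theorem isQuasiNilOfOrder_zero_iff (g : G) : IsQuasiNilOfOrder 0 g ↔ g = 1 := by
  simp [IsQuasiNilOfOrder, epsEngel]

theorem isQuasiNilOfOrder_succ_iff (k : ℕ) (g : G) :
    IsQuasiNilOfOrder (k + 1) g ↔
      ∀ a : G, ∃ n, 1 ≤ n ∧ IsQuasiNilOfOrder k (engelWord n a g) := by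
  constructor
  · rintro ⟨ν, hν1, hν⟩ a
    refine ⟨ν 0 fun _ => a, hν1 _ _, fun i f => ν i.succ (Fin.cons a f), fun _ _ => hν1 _ _,
      fun b => ?_⟩
    have h := hν (Fin.cons a b)
    rw [List.ofFn_succ, epsEngel_cons] at h
    convert h using 4 with i
    · exact Prod.ext (congrArg (ν i.succ) (funext (Fin.cons_castLE _ a b)).symm) rfl
    · funext j
      exact Fin.cases rfl (fun j => j.elim0) j
    · rfl
  · intro h
    choose n hn ν hν1 hν using h
    let μ : ∀ i : Fin (k + 1), (Fin (i + 1) → G) → ℕ :=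
      Fin.cases (fun f => n (f 0)) fun i f => ν (f 0) i (Fin.tail f)
    refine ⟨μ, Fin.cases (fun _ => hn _) fun _ _ => hν1 _ _ _, fun b => ?_⟩
    rw [List.ofFn_succ, epsEngel_cons]
    -- `μ` reads `a₁` off the prefix and passes the rest to the witness chosen for `a₁`,
    -- so the goal is definitionally the instance of `hν` at `a₁ = b 0`.
    exact hν (b 0) (Fin.tail b)

theorem mem_of_isQuasiNilOfOrder (N : Subgroup G) (hN : N.Normal)
    (hN_nil : ∀ g : G, IsNilElementQuot N hN g → g ∈ N) :
    ∀ (m : ℕ) (g : G), IsQuasiNilOfOrder m g → g ∈ N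
  | 0, g, hg => (isQuasiNilOfOrder_zero_iff g).1 hg ▸ N.one_mem
  | m + 1, g, hg => by
    by_contra hgN
    obtain ⟨a, ha⟩ : ∃ a : G, ∀ n, 1 ≤ n → engelWord n a g ∉ N := by
      simpa [isNilElementQuot_iff] using mt (hN_nil g) hgN
    obtain ⟨n, hn, hq⟩ := (isQuasiNilOfOrder_succ_iff m g).1 hg a
    exact ha n hn (mem_of_isQuasiNilOfOrder N hN hN_nil m _ hq)

theorem isQuasiNilOfOrder_of_mem {k : ℕ} (R : Fin (k + 1) → Subgroup G) (hbot : R 0 = ⊥)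
    (hnorm : ∀ i, (R i).Normal)
    (hnil : ∀ i : Fin k, ∀ g ∈ R i.succ, IsNilElementQuot (R i.castSucc) (hnorm _) g) :
    ∀ (i : Fin (k + 1)) (g : G), g ∈ R i → IsQuasiNilOfOrder i g := by
  refine Fin.induction ?_ fun i ih g hg => ?_
  · intro g hg
    rw [hbot, Subgroup.mem_bot] at hg
    simpa [isQuasiNilOfOrder_zero_iff] using hg
  · refine (isQuasiNilOfOrder_succ_iff i g).2 fun a => ?_
    obtain ⟨n, hn, hmem⟩ := (isNilElementQuot_iff _ _ g).1 (hnil i g hg) a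
    exact ⟨n, hn, ih _ hmem⟩

end

theorem radical_eq_quasiNil_set_general {G : Type*} [Group G] (k : ℕ) (hk : 1 ≤ k)
    (R : Fin (k + 1) → Subgroup G) (hbot : R 0 = ⊥)
    (hnorm : ∀ i, (R i).Normal)
    (hnil : ∀ i : Fin k, ∀ g : G,
      IsNilElementQuot (R i.castSucc) (hnorm i.castSucc) g ↔ g ∈ R i.succ)
    (htopnil : ∀ g : G, IsNilElementQuot (R (Fin.last k)) (hnorm (Fin.last k)) g →
      g ∈ R (Fin.last k)) :
    ∀ g : G, g ∈ R (Fin.last k) ↔ IsQuasiNil g := by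
  intro g
  constructor
  · intro hg
    have hq := isQuasiNilOfOrder_of_mem R hbot hnorm (fun i g => (hnil i g).2) (Fin.last k) g hg
    exact ⟨k, hk, by simpa using hq⟩
  · rintro ⟨m, -, hm⟩
    exact mem_of_isQuasiNilOfOrder _ _ htopnil m g hm

/-- given a chain of normal subgroups `1 = R₀ ≤ R₁ ≤ … ≤ R_k` of `G`
such that the image of `R_i` in `G/R_{i-1}` is exactly the set of nil-elements of
`G/R_{i-1}`, and the identity is the only nil-element of `G/R_k`, the subgroup `R_k`
is exactly the set of quasi-nil elements of `G`. -/
theorem radical_eq_quasiNil_set {G : Type*} [Group G] (k : ℕ) (hk : 1 ≤ k)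
    (R : Fin (k + 1) → Subgroup G) (hbot : R 0 = ⊥)
    (hnorm : ∀ i, (R i).Normal)
    (hmono : ∀ i : Fin k, R i.castSucc ≤ R i.succ)
    (hnil : ∀ i : Fin k, ∀ g : G,
      IsNilElementQuot (R i.castSucc) (hnorm i.castSucc) g ↔ g ∈ R i.succ)
    (htopnil : ∀ g : G, IsNilElementQuot (R (Fin.last k)) (hnorm (Fin.last k)) g →
      g ∈ R (Fin.last k)) :
    ∀ g : G, g ∈ R (Fin.last k) ↔ IsQuasiNil g :=
  radical_eq_quasiNil_set_general k hk R hbot hnorm hnil htopnil
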